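/- arXiv:2111.13774 — 3 statements merged into one kernel-verified Lean document; each statement's English description precedes it below -/
import Mathlib

section
/- For fixed reals c_1,...,c_n and x_1,...,x_n with n ≥ 2 and π uniform on S_n, the variance of S(π) = Σ_{i=1}^n c_i x_{π(i)} equals (1/(n-1)) · (Σ_i (c_i - c̄)^2) · (Σ_j (x_j - x̄)^2), where c̄ = n^{-1} Σ_i c_i and x̄ = n^{-1} Σ_j x_j. -/
open Finset Equiv

lemma sumA (m : ℕ) (i : Fin (m+1)) (f : Fin (m+1) → ℝ) :
    ∑ π : Perm (Fin (m+1)), f (π i) = (m.factorial : ℝ) * ∑ j, f j := by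
  have h1 : ∑ π : Perm (Fin (m+1)), f (π i) = ∑ π : Perm (Fin (m+1)), f (π 0) := by
    refine Fintype.sum_equiv (Equiv.mulRight (Equiv.swap 0 i)) _ _ (fun π => ?_)
    simp [Equiv.Perm.mul_apply]
  have h2 : ∑ π : Perm (Fin (m+1)), f (π 0)
      = ∑ pe : Fin (m+1) × Perm (Fin m), f pe.1 := by
    refine (Fintype.sum_equiv Equiv.Perm.decomposeFin.symm _ _ (fun pe => ?_)).symm
    obtain ⟨p, e⟩ := pe
    simp
  rw [h1, h2, Fintype.sum_prod_type]
  simp [Finset.sum_const, Fintype.card_perm, Fintype.card_fin, mul_comm, Finset.mul_sum]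

lemma sumB (m : ℕ) (i k : Fin (m+2)) (hik : i ≠ k) (g : Fin (m+2) → Fin (m+2) → ℝ) :
    ∑ π : Perm (Fin (m+2)), g (π i) (π k)
      = (m.factorial : ℝ) * ∑ p, ((∑ l, g p l) - g p p) := by
  set k' : Fin (m+2) := Equiv.swap 0 i k with hk'
  have hk0 : k' ≠ 0 := by
    intro h
    apply hik
    have h2 := congrArg (Equiv.swap 0 i) h
    simpa [hk'] using h2.symm
  have h1 : ∑ π : Perm (Fin (m+2)), g (π i) (π k)
      = ∑ π : Perm (Fin (m+2)), g (π 0) (π k') := by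
    refine Fintype.sum_equiv (Equiv.mulRight (Equiv.swap 0 i)) _ _ (fun π => ?_)
    simp [Equiv.Perm.mul_apply, hk']
  obtain ⟨j, hj⟩ : ∃ j : Fin (m+1), k' = j.succ := ⟨k'.pred hk0, (Fin.succ_pred _ _).symm⟩
  have h2 : ∑ π : Perm (Fin (m+2)), g (π 0) (π k')
      = ∑ pe : Fin (m+2) × Perm (Fin (m+1)), g pe.1 (Equiv.swap 0 pe.1 ((pe.2 j).succ)) := by
    refine (Fintype.sum_equiv Equiv.Perm.decomposeFin.symm _ _ (fun pe => ?_)).symm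
    obtain ⟨p, e⟩ := pe
    simp [hj]
  rw [h1, h2, Fintype.sum_prod_type]
  have h3 : ∀ p : Fin (m+2),
      ∑ e : Perm (Fin (m+1)), g p (Equiv.swap 0 p ((e j).succ))
        = (m.factorial : ℝ) * ∑ y : Fin (m+1), g p (Equiv.swap 0 p y.succ) :=
    fun p => sumA m j (fun y => g p (Equiv.swap 0 p y.succ))
  have h4 : ∀ p : Fin (m+2),
      ∑ y : Fin (m+1), g p (Equiv.swap 0 p y.succ) = (∑ l, g p l) - g p p := by
    intro p
    have h5 : ∑ l : Fin (m+2), g p (Equiv.swap 0 p l) = ∑ l, g p l :=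
      Equiv.sum_comp (Equiv.swap 0 p) (fun l => g p l)
    rw [Fin.sum_univ_succ] at h5
    simpa using (by linarith [h5] : ∑ y : Fin (m+1), g p (Equiv.swap 0 p y.succ)
      = (∑ l, g p l) - g p (Equiv.swap 0 p 0))
  simp only [h3, h4, ← Finset.mul_sum]

/-- Hoeffding's (1951) variance formula for a simple linear permutation statistic
`S(π) = ∑ i, c i * x (π i)` with `π` uniform on the symmetric group. -/
theorem stmt1 (n : ℕ) (hn : 2 ≤ n) (c x : Fin n → ℝ) :
    (Nat.factorial n : ℝ)⁻¹ * ∑ π : Equiv.Perm (Fin n),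
        ((∑ i, c i * x (π i)) -
          (Nat.factorial n : ℝ)⁻¹ * ∑ π' : Equiv.Perm (Fin n), ∑ i, c i * x (π' i)) ^ 2
      = ((n : ℝ) - 1)⁻¹ * (∑ i, (c i - (n : ℝ)⁻¹ * ∑ i', c i') ^ 2)
          * (∑ j, (x j - (n : ℝ)⁻¹ * ∑ j', x j') ^ 2) := by
  obtain ⟨m, rfl⟩ : ∃ m, n = m + 2 := ⟨n - 2, by omega⟩
  set Sc : ℝ := ∑ i, c i with hSc
  set Sx : ℝ := ∑ j, x j with hSx
  set Qc : ℝ := ∑ i, c i * c i with hQc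
  set Qx : ℝ := ∑ j, x j * x j with hQx
  set A : ℝ := ((m+1).factorial : ℝ) * Qx with hA
  set B : ℝ := (m.factorial : ℝ) * (Sx^2 - Qx) with hB
  set K : ℝ := ((m+2).factorial : ℝ) with hK
  -- mean
  have hmean : ∑ π : Perm (Fin (m+2)), ∑ i, c i * x (π i)
      = ((m+1).factorial : ℝ) * (Sc * Sx) := by
    rw [Finset.sum_comm]
    have e : ∀ i : Fin (m+2), ∑ π : Perm (Fin (m+2)), c i * x (π i)
        = c i * (((m+1).factorial : ℝ) * Sx) := by
      intro i; rw [← Finset.mul_sum, sumA (m+1) i x]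
    rw [Finset.sum_congr rfl (fun i _ => e i), ← Finset.sum_mul]
    ring
  -- second moment pieces
  have hT : ∀ i k : Fin (m+2), ∑ π : Perm (Fin (m+2)), x (π i) * x (π k)
      = if i = k then A else B := by
    intro i k
    split_ifs with h
    · subst h
      simpa [hA] using sumA (m+1) i (fun y => x y * x y)
    · rw [sumB m i k h (fun a b => x a * x b)]
      have e : ∑ p, ((∑ l, x p * x l) - x p * x p) = Sx^2 - Qx := by
        simp only [← Finset.mul_sum, ← hSx]
        rw [Finset.sum_sub_distrib, ← Finset.sum_mul, ← hSx, ← hQx]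
        ring
      rw [e]
  have hsq : ∑ π : Perm (Fin (m+2)), (∑ i, c i * x (π i))^2
      = B * Sc^2 + (A - B) * Qc := by
    have e1 : ∀ π : Perm (Fin (m+2)), (∑ i, c i * x (π i))^2
        = ∑ i, ∑ k, (c i * c k) * (x (π i) * x (π k)) := by
      intro π
      rw [sq, Finset.sum_mul_sum]
      exact Finset.sum_congr rfl fun i _ => Finset.sum_congr rfl fun k _ => by ring
    rw [Finset.sum_congr rfl fun π _ => e1 π, Finset.sum_comm]
    rw [Finset.sum_congr rfl fun i (_ : i ∈ univ) => Finset.sum_comm]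
    have e2 : ∀ i k : Fin (m+2), ∑ π : Perm (Fin (m+2)), (c i * c k) * (x (π i) * x (π k))
        = (c i * c k) * B + (if i = k then (c i * c k) * (A - B) else 0) := by
      intro i k
      rw [← Finset.mul_sum, hT i k]
      split_ifs <;> ring
    simp only [e2, Finset.sum_add_distrib, Finset.sum_ite_eq, Finset.mem_univ, if_true]
    have e3 : ∑ i, ∑ k, (c i * c k) * B = B * Sc^2 := by
      calc ∑ i, ∑ k, (c i * c k) * B = ∑ i, c i * ∑ k, c k * B := by
            refine Finset.sum_congr rfl fun i _ => ?_
            rw [Finset.mul_sum]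
            exact Finset.sum_congr rfl fun k _ => by ring
        _ = ∑ i, c i * (Sc * B) := by
            refine Finset.sum_congr rfl fun i _ => ?_
            rw [← Finset.sum_mul, ← hSc]
        _ = Sc * (Sc * B) := by rw [← Finset.sum_mul, ← hSc]
        _ = B * Sc^2 := by ring
    have e4 : ∑ i, (c i * c i) * (A - B) = (A - B) * Qc := by
      rw [← Finset.sum_mul, ← hQc]; ring
    rw [e3, e4]
  -- variance expansion
  have hcard : (Fintype.card (Perm (Fin (m+2))) : ℝ) = K := by
    rw [Fintype.card_perm, Fintype.card_fin, hK]
  have hKne : K ≠ 0 := by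
    rw [hK]; exact_mod_cast (Nat.factorial_ne_zero (m+2))
  have hvar : ∑ π : Perm (Fin (m+2)),
      ((∑ i, c i * x (π i)) - K⁻¹ * ∑ π' : Perm (Fin (m+2)), ∑ i, c i * x (π' i)) ^ 2
      = (B * Sc^2 + (A - B) * Qc) - K⁻¹ * (((m+1).factorial : ℝ) * (Sc * Sx))^2 := by
    have e : ∀ π : Perm (Fin (m+2)),
        ((∑ i, c i * x (π i)) - K⁻¹ * (((m+1).factorial : ℝ) * (Sc * Sx))) ^ 2
          = (∑ i, c i * x (π i))^2
            - 2 * (K⁻¹ * (((m+1).factorial : ℝ) * (Sc * Sx))) * (∑ i, c i * x (π i))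
            + (K⁻¹ * (((m+1).factorial : ℝ) * (Sc * Sx)))^2 := fun π => by ring
    rw [hmean]
    rw [Finset.sum_congr rfl fun π _ => e π]
    rw [Finset.sum_add_distrib, Finset.sum_sub_distrib, ← Finset.mul_sum, hmean, hsq,
      Finset.sum_const, Finset.card_univ, nsmul_eq_mul, hcard]
    field_simp
    ring
  -- centered sums of squares
  have hcc : ∑ i, (c i - ((m+2 : ℕ) : ℝ)⁻¹ * Sc) ^ 2 = Qc - ((m+2 : ℕ) : ℝ)⁻¹ * Sc^2 := by
    have e : ∀ i : Fin (m+2), (c i - ((m+2 : ℕ) : ℝ)⁻¹ * Sc) ^ 2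
        = c i * c i - (2 * (((m+2 : ℕ) : ℝ)⁻¹ * Sc)) * c i + (((m+2 : ℕ) : ℝ)⁻¹ * Sc)^2 :=
      fun i => by ring
    rw [Finset.sum_congr rfl fun i _ => e i, Finset.sum_add_distrib, Finset.sum_sub_distrib,
      ← Finset.mul_sum, ← hQc, ← hSc, Finset.sum_const, Finset.card_univ, Fintype.card_fin,
      nsmul_eq_mul]
    have h2 : ((m+2 : ℕ) : ℝ) ≠ 0 := by positivity
    field_simp
    ring
  have hxx : ∑ j, (x j - ((m+2 : ℕ) : ℝ)⁻¹ * Sx) ^ 2 = Qx - ((m+2 : ℕ) : ℝ)⁻¹ * Sx^2 := by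
    have e : ∀ j : Fin (m+2), (x j - ((m+2 : ℕ) : ℝ)⁻¹ * Sx) ^ 2
        = x j * x j - (2 * (((m+2 : ℕ) : ℝ)⁻¹ * Sx)) * x j + (((m+2 : ℕ) : ℝ)⁻¹ * Sx)^2 :=
      fun j => by ring
    rw [Finset.sum_congr rfl fun j _ => e j, Finset.sum_add_distrib, Finset.sum_sub_distrib,
      ← Finset.mul_sum, ← hQx, ← hSx, Finset.sum_const, Finset.card_univ, Fintype.card_fin,
      nsmul_eq_mul]
    have h2 : ((m+2 : ℕ) : ℝ) ≠ 0 := by positivity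
    field_simp
    ring
  rw [hvar, hcc, hxx, hA, hB, hK]
  have hfac2 : ((m+2).factorial : ℝ) = ((m:ℝ)+2) * (((m:ℝ)+1) * (m.factorial : ℝ)) := by
    rw [show m + 2 = (m+1) + 1 from rfl, Nat.factorial_succ, Nat.factorial_succ]
    push_cast
    ring
  have hfac1 : ((m+1).factorial : ℝ) = ((m:ℝ)+1) * (m.factorial : ℝ) := by
    rw [Nat.factorial_succ]; push_cast; ring
  have hmf : (m.factorial : ℝ) ≠ 0 := by exact_mod_cast Nat.factorial_ne_zero m
  have h1 : ((m:ℝ)+1) ≠ 0 := by positivity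
  have h2 : ((m:ℝ)+2) ≠ 0 := by positivity
  rw [hfac1, hfac2]
  push_cast
  have h3 : ((m:ℝ) + 2) - 1 ≠ 0 := by intro h; apply h1; linarith
  field_simp
  ring
end

section
/- Let c_n(i,j), 1 ≤ i,j ≤ n, be a real array and define g_n(i,j) = c_n(i,j) - n^{-1} Σ_i c_n(i,j) - n^{-1} Σ_j c_n(i,j) + n^{-2} Σ_{i,j} c_n(i,j). Then for a uniform random permutation π, Var_π[Σ_i c_n(i, π(i))] = (1/(n-1)) Σ_{i=1}^n Σ_{j=1}^n g_n(i,j)^2. -/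
/-!
Writing `c i j = g i j + rᵢ + sⱼ - m` with `g` doubly centred, `rᵢ`, `sⱼ` the row and column
means and `m` the grand mean, the statistic `∑ i, c i (π i)` equals `n m + ∑ i, g i (π i)`, and
`n m` is its mean. Hence the variance is the second moment of `∑ i, g i (π i)`. Since `π i` is
uniform on `n` points and `(π i, π k)` for `i ≠ k` is uniform on the `n (n - 1)` pairs of
distinct points, the vanishing row sums of `g` turn each cross term into
`-(n (n - 1))⁻¹ ∑ j, g i j * g k j`, and the vanishing column sums then make all cross terms
together contribute `(n (n - 1))⁻¹ ∑ i, ∑ j, g i j ^ 2`, which added to the diagonal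
contribution `n⁻¹ ∑ i, ∑ j, g i j ^ 2` gives `(n - 1)⁻¹ ∑ i, ∑ j, g i j ^ 2`.
-/

open Finset Equiv
open scoped Nat

theorem MulAction.card_nsmul_sum_comp_smul {G X M : Type*} [Group G] [Fintype G] [MulAction G X]
    [Fintype X] [MulAction.IsPretransitive G X] [AddCommMonoid M] (f : X → M) (x : X) :
    Fintype.card X • ∑ g : G, f (g • x) = Fintype.card G • ∑ y, f y := by
  have orbit_sum : ∀ y : X, ∑ g : G, f (g • y) = ∑ g : G, f (g • x) := by
    intro y
    obtain ⟨h, rfl⟩ := MulAction.exists_smul_eq G x y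
    simpa only [Equiv.coe_mulRight, mul_smul] using
      Equiv.sum_comp (Equiv.mulRight h) (fun g => f (g • x))
  calc Fintype.card X • ∑ g : G, f (g • x) = ∑ y : X, ∑ g : G, f (g • y) := by
        simp only [orbit_sum, sum_const, card_univ]
    _ = ∑ g : G, ∑ y : X, f (g • y) := sum_comm
    _ = Fintype.card G • ∑ y, f y := by
        simp only [fun g : G => (MulAction.bijective g).sum_comp f, sum_const, card_univ]

theorem Function.Embedding.sum_finTwo_eq_sum_sum_erase {α M : Type*} [Fintype α] [DecidableEq α]
    [AddCommMonoid M] (f : α → α → M) :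
    ∑ e : Fin 2 ↪ α, f (e 0) (e 1) = ∑ j, ∑ l ∈ univ.erase j, f j l := by
  refine (twoEmbeddingEquiv.sum_comp fun p => f p.1.1 p.1.2).trans ?_
  rw [sum_set_coe (f := fun p : α × α => f p.1 p.2), Set.toFinset_ofPred,
    sum_filter, Fintype.sum_prod_type]
  simp only [← filter_ne, sum_filter]

namespace Equiv.Perm

variable {α M : Type*} [Fintype α] [DecidableEq α] [AddCommMonoid M]

theorem card_nsmul_sum_comp_apply (f : α → M) (i : α) :
    Fintype.card α • ∑ σ : Perm α, f (σ i) = (Fintype.card α)! • ∑ j, f j := by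
  rw [← Fintype.card_perm]
  exact MulAction.card_nsmul_sum_comp_smul f i

theorem descFactorial_two_nsmul_sum_comp_apply_apply (f : α → α → M) {i k : α} (hik : i ≠ k) :
    (Fintype.card α).descFactorial 2 • ∑ σ : Perm α, f (σ i) (σ k)
      = (Fintype.card α)! • ∑ j, ∑ l ∈ univ.erase j, f j l := by
  have := isMultiplyPretransitive α 2
  have h := MulAction.card_nsmul_sum_comp_smul (G := Perm α)
    (fun e : Fin 2 ↪ α => f (e 0) (e 1)) (Function.Embedding.embFinTwo hik)
  rwa [Fintype.card_embedding_eq, Fintype.card_fin, Fintype.card_perm,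
    Function.Embedding.sum_finTwo_eq_sum_sum_erase] at h

end Equiv.Perm

section DoublyCentered

variable {α : Type*} [Fintype α]

noncomputable def doublyCentered (c : α → α → ℝ) (i j : α) : ℝ :=
  c i j - (Fintype.card α : ℝ)⁻¹ * ∑ i', c i' j - (Fintype.card α : ℝ)⁻¹ * ∑ j', c i j'
    + ((Fintype.card α : ℝ) ^ 2)⁻¹ * ∑ i', ∑ j', c i' j'

theorem sum_doublyCentered_right (c : α → α → ℝ) (i : α) : ∑ j, doublyCentered c i j = 0 := by
  have : (Fintype.card α : ℝ) ≠ 0 := Nat.cast_ne_zero.mpr (Fintype.card_pos_iff.mpr ⟨i⟩).ne'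
  simp only [doublyCentered, sum_add_distrib, sum_sub_distrib, ← mul_sum, sum_const, card_univ,
    nsmul_eq_mul, sum_comm (γ := α) (f := fun i' j => c i' j)]
  field_simp
  ring

theorem sum_doublyCentered_left (c : α → α → ℝ) (j : α) : ∑ i, doublyCentered c i j = 0 := by
  have : (Fintype.card α : ℝ) ≠ 0 := Nat.cast_ne_zero.mpr (Fintype.card_pos_iff.mpr ⟨j⟩).ne'
  simp only [doublyCentered, sum_add_distrib, sum_sub_distrib, ← mul_sum, sum_const, card_univ,
    nsmul_eq_mul]
  field_simp
  ring

theorem sum_doublyCentered_apply_perm (c : α → α → ℝ) (σ : Perm α) :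
    ∑ i, doublyCentered c i (σ i)
      = ∑ i, c i (σ i) - (Fintype.card α : ℝ)⁻¹ * ∑ i, ∑ j, c i j := by
  simp only [doublyCentered, sum_add_distrib, sum_sub_distrib, ← mul_sum, sum_const, card_univ,
    nsmul_eq_mul, Equiv.sum_comp σ (fun j => ∑ i', c i' j)]
  rw [sum_comm (s := univ) (t := univ) (f := fun j i' => c i' j)]
  -- `n⁻¹ * n⁻¹ * n = n⁻¹` holds also for `n = 0`
  have h := mul_self_mul_inv (Fintype.card α : ℝ)⁻¹
  rw [inv_inv] at h
  rw [sq, mul_inv]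
  linear_combination (∑ i, ∑ j, c i j) * h

end DoublyCentered

section Moments

variable {α : Type*} [Fintype α] [DecidableEq α]

theorem mean_sum_apply_perm [Nonempty α] (c : α → α → ℝ) :
    ((Fintype.card α)! : ℝ)⁻¹ * ∑ σ : Perm α, ∑ i, c i (σ i)
      = (Fintype.card α : ℝ)⁻¹ * ∑ i, ∑ j, c i j := by
  have hn : (Fintype.card α : ℝ) ≠ 0 := Nat.cast_ne_zero.mpr Fintype.card_ne_zero
  have hN : ((Fintype.card α)! : ℝ) ≠ 0 := by positivity
  have row_mean : ∀ i, ∑ σ : Perm α, c i (σ i)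
      = (Fintype.card α)! / Fintype.card α * ∑ j, c i j := fun i => by
    rw [div_mul_eq_mul_div, eq_div_iff hn, mul_comm]
    simpa only [nsmul_eq_mul] using Perm.card_nsmul_sum_comp_apply (c i) i
  rw [sum_comm]
  simp only [row_mean, ← mul_sum]
  field_simp

theorem card_mul_sub_one_mul_sum_mul_apply_perm {g : α → α → ℝ} (hg : ∀ i, ∑ j, g i j = 0)
    (i k : α) :
    (Fintype.card α : ℝ) * (Fintype.card α - 1) * ∑ σ : Perm α, g i (σ i) * g k (σ k)
      = (Fintype.card α)! * ((if i = k then (Fintype.card α : ℝ) else 0) - 1)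
          * ∑ j, g i j * g k j := by
  rcases eq_or_ne i k with rfl | hik
  · have h := Perm.card_nsmul_sum_comp_apply (fun j => g i j * g i j) i
    rw [nsmul_eq_mul, nsmul_eq_mul] at h
    rw [if_pos rfl]
    linear_combination ((Fintype.card α : ℝ) - 1) * h
  · have h := Perm.descFactorial_two_nsmul_sum_comp_apply_apply (fun j l => g i j * g k l) hik
    rw [nsmul_eq_mul, nsmul_eq_mul, Nat.cast_descFactorial_two] at h
    simp only [← mul_sum, sum_erase_eq_sub (mem_univ _), hg k, mul_zero, zero_sub,
      sum_neg_distrib] at h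
    rw [h, if_neg hik]
    ring

theorem sub_one_mul_sum_sq_sum_apply_perm [Nonempty α] {g : α → α → ℝ}
    (hrow : ∀ i, ∑ j, g i j = 0) (hcol : ∀ j, ∑ i, g i j = 0) :
    ((Fintype.card α : ℝ) - 1) * ∑ σ : Perm α, (∑ i, g i (σ i)) ^ 2
      = (Fintype.card α)! * ∑ i, ∑ j, g i j ^ 2 := by
  have hn : (Fintype.card α : ℝ) ≠ 0 := Nat.cast_ne_zero.mpr Fintype.card_ne_zero
  apply mul_left_cancel₀ hn
  calc (Fintype.card α : ℝ) * (((Fintype.card α : ℝ) - 1) * ∑ σ : Perm α, (∑ i, g i (σ i)) ^ 2)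
      = ∑ i, ∑ k, (Fintype.card α : ℝ) * (Fintype.card α - 1)
          * ∑ σ : Perm α, g i (σ i) * g k (σ k) := by
        simp only [sq, sum_mul_sum]
        simp only [mul_sum, mul_assoc]
        rw [sum_comm]
        exact sum_congr rfl fun i _ => sum_comm
    _ = ∑ i, ∑ k, (Fintype.card α)! * ((if i = k then (Fintype.card α : ℝ) else 0) - 1)
          * ∑ j, g i j * g k j := by
        simp only [card_mul_sub_one_mul_sum_mul_apply_perm hrow]
    _ = (Fintype.card α : ℝ) * ((Fintype.card α)! * ∑ i, ∑ j, g i j ^ 2) := by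
        have cross : ∑ i, ∑ k, ∑ j, g i j * g k j = 0 :=
          sum_eq_zero fun i _ => by
            rw [sum_comm]
            simp only [← mul_sum, hcol, mul_zero, sum_const_zero]
        simp only [mul_sub, mul_one, sub_mul, sum_sub_distrib, mul_ite, mul_zero, ite_mul,
          zero_mul, sum_ite_eq, mem_univ, if_true, ← mul_sum, cross]
        simp only [sub_zero, sq]
        ring

theorem variance_sum_apply_perm (hα : 2 ≤ Fintype.card α) (c : α → α → ℝ) :
    ((Fintype.card α)! : ℝ)⁻¹ * ∑ σ : Perm α,
        ((∑ i, c i (σ i)) - ((Fintype.card α)! : ℝ)⁻¹ * ∑ σ' : Perm α, ∑ i, c i (σ' i)) ^ 2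
      = ((Fintype.card α : ℝ) - 1)⁻¹ * ∑ i, ∑ j, doublyCentered c i j ^ 2 := by
  have : Nonempty α := Fintype.card_pos_iff.mp (by omega)
  have hn1 : (Fintype.card α : ℝ) - 1 ≠ 0 := by
    have : (2 : ℝ) ≤ Fintype.card α := by exact_mod_cast hα
    linarith
  have hN : ((Fintype.card α)! : ℝ) ≠ 0 := by positivity
  simp only [mean_sum_apply_perm, ← sum_doublyCentered_apply_perm]
  field_simp
  linear_combination sub_one_mul_sum_sq_sum_apply_perm (sum_doublyCentered_right c)
    (sum_doublyCentered_left c)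

end Moments

/-- Variance formula in Hoeffding's combinatorial CLT:
`Var_π[∑ i, c (i, π i)] = (n-1)⁻¹ ∑_{i,j} g(i,j)²` where `g` is the doubly-centered array. -/
theorem stmt2 (n : ℕ) (hn : 2 ≤ n) (c : Fin n → Fin n → ℝ) :
    (Nat.factorial n : ℝ)⁻¹ * ∑ π : Equiv.Perm (Fin n),
        ((∑ i, c i (π i)) -
          (Nat.factorial n : ℝ)⁻¹ * ∑ π' : Equiv.Perm (Fin n), ∑ i, c i (π' i)) ^ 2
      = ((n : ℝ) - 1)⁻¹ * ∑ i, ∑ j,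
          (c i j - (n : ℝ)⁻¹ * ∑ i', c i' j - (n : ℝ)⁻¹ * ∑ j', c i j'
              + ((n : ℝ) ^ 2)⁻¹ * ∑ i', ∑ j', c i' j') ^ 2 := by
  simpa only [doublyCentered, Fintype.card_fin] using
    variance_sum_apply_perm (α := Fin n) (by rwa [Fintype.card_fin]) c
end

section
/- Suppose the n rows of the instrument matrix W are i.i.d. and independent of (X, u), where X contains an intercept column. Then under the null hypothesis θ = θ_0, the statistic AR(W, X, ũ) = ũ' M_X W (W' M_X Σ̃_u M_X W)^{-1} W' M_X ũ, with ũ = M_X(y − Yθ_0) and Σ̃_u = diag(ũ_1^2,...,ũ_n^2), has the same distribution as AR(W_π, X, ũ) for any fixed permutation π of the rows of W. Consequently the randomization test φ_n^{PAR_1} based on permuting rows of W has exact size: E[φ_n^{PAR_1}] = α for every α ∈ (0,1). -/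
open Finset Matrix MeasureTheory ProbabilityTheory

/-- Annihilator (residual-maker) matrix `M_X = I - X(X'X)⁻¹X'`. -/
noncomputable def projPerp {n p : ℕ} (X : Matrix (Fin n) (Fin p) ℝ) :
    Matrix (Fin n) (Fin n) ℝ :=
  1 - X * (Xᵀ * X)⁻¹ * Xᵀ

/-- Heteroskedasticity-robust Anderson–Rubin statistic
`AR(W, X, ũ) = ũ' M_X W (W' M_X Σ̃_u M_X W)⁻¹ W' M_X ũ` with `ũ = M_X u` and
`Σ̃_u = diag(ũ₁²,…,ũₙ²)`. -/
noncomputable def ARstat {n k p : ℕ} (W : Matrix (Fin n) (Fin k) ℝ)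
    (X : Matrix (Fin n) (Fin p) ℝ) (u : Fin n → ℝ) : ℝ :=
  let M := projPerp X
  let ut := M.mulVec u
  let B := Wᵀ * M
  let v := B.mulVec ut
  v ⬝ᵥ ((B * Matrix.diagonal (fun i => (ut i) ^ 2) * Bᵀ)⁻¹).mulVec v

/-- The (possibly randomized) level-`α` randomization test `φ` built from the `n!`
permuted values `vals` and the observed statistic `obs`: with `r = n! - ⌊n!α⌋`, `t` the
`r`-th order statistic of `vals`, `N⁺ = #{vals > t}`, `N⁰ = #{vals = t}`,
`a = (n!α - N⁺)/N⁰`, the test is `1` if `obs > t`, `a` if `obs = t`, `0` otherwise. -/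
noncomputable def randTest (n : ℕ) (α : ℝ) (vals : Equiv.Perm (Fin n) → ℝ)
    (obs : ℝ) : ℝ :=
  let N := Nat.factorial n
  let r : ℕ := N - (⌊(N : ℝ) * α⌋).toNat
  let t : ℝ := sInf {x : ℝ | r ≤ (Finset.univ.filter (fun π : Equiv.Perm (Fin n) => vals π ≤ x)).card}
  let Nplus : ℕ := (Finset.univ.filter (fun π : Equiv.Perm (Fin n) => t < vals π)).card
  let N0 : ℕ := (Finset.univ.filter (fun π : Equiv.Perm (Fin n) => vals π = t)).card
  let a : ℝ := ((N : ℝ) * α - (Nplus : ℝ)) / (N0 : ℝ)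
  if t < obs then 1 else if obs = t then a else 0

/-!
Under the null the statistic is `T (W, (X, u))` for one fixed measurable map `T`. Since the
rows of `W` are i.i.d. and independent of `(X, u)`, the law of `(W ∘ π, (X, u))` does not
depend on the row permutation `π`, which is the first claim. For the second, write `Y π` for
the statistic computed from `W ∘ π`. The test only depends on the values `Y` up to relabelling,
so its expectation at the observed value `Y 1` equals its expectation at any `Y π`. Averaging
over the `n!` permutations, the randomized threshold is built so that the test summed over all
`n!` values is exactly `n! α`.
-/

open scoped Nat

lemma exists_setOf_le_card_filter_le_eq_Ici {ι α : Type*} [Fintype ι] [LinearOrder α]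
    (f : ι → α) {r : ℕ} (hr1 : 1 ≤ r) (hr : r ≤ Fintype.card ι) :
    ∃ i₀, {x | r ≤ #{i | f i ≤ x}} = Set.Ici (f i₀) := by
  have hcard_mono : Monotone fun x => #{i | f i ≤ x} := fun x y hxy =>
    card_le_card fun i hi => by simp only [mem_filter] at hi ⊢; exact ⟨hi.1, hi.2.trans hxy⟩
  obtain ⟨iₘ, -, hiₘ⟩ := (univ : Finset ι).exists_max_image f
    (univ_nonempty_iff.2 (Fintype.card_pos_iff.1 (hr1.trans hr)))
  have hne : ({i | r ≤ #{j | f j ≤ f i}} : Finset ι).Nonempty := ⟨iₘ, by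
    rw [mem_filter, filter_true_of_mem fun j _ => hiₘ j (mem_univ j)]
    exact ⟨mem_univ _, hr⟩⟩
  obtain ⟨i₀, hi₀mem, hi₀⟩ := exists_min_image _ f hne
  refine ⟨i₀, Set.ext fun x =>
    ⟨fun hx => ?_, fun hx => (mem_filter.1 hi₀mem).2.trans (hcard_mono hx)⟩⟩
  -- the largest value `f i ≤ x` has the same count as `x`, hence `f i₀ ≤ f i`
  obtain ⟨i, hi, hix⟩ := exists_max_image {j | f j ≤ x} f
    (card_pos.1 (hr1.trans hx))
  have hcount : #{j | f j ≤ x} ≤ #{j | f j ≤ f i} :=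
    card_le_card fun j hj => mem_filter.2 ⟨mem_univ j, hix j hj⟩
  exact (hi₀ i (mem_filter.2 ⟨mem_univ i, hx.trans hcount⟩)).trans (mem_filter.1 hi).2

section RandTest

variable {n : ℕ} {α : ℝ}

lemma exists_randTest_threshold_eq (hα0 : 0 < α) (hα1 : α < 1)
    (vals : Equiv.Perm (Fin n) → ℝ) :
    ∃ π₀, {x : ℝ | (n !) - (⌊(n ! : ℝ) * α⌋).toNat ≤ #{π | vals π ≤ x}} =
      Set.Ici (vals π₀) := by
  have hN : (0 : ℝ) < n ! := mod_cast n.factorial_pos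
  have hfloor_lt : ⌊(n ! : ℝ) * α⌋ < n ! := Int.floor_lt.2 (by push_cast; nlinarith)
  have hfloor_nonneg : 0 ≤ ⌊(n ! : ℝ) * α⌋ := Int.floor_nonneg.2 (by positivity)
  refine exists_setOf_le_card_filter_le_eq_Ici vals ?_ ?_
  · omega
  · rw [Fintype.card_perm, Fintype.card_fin]; omega

lemma randTest_comp_equiv (vals : Equiv.Perm (Fin n) → ℝ)
    (e : Equiv.Perm (Fin n) ≃ Equiv.Perm (Fin n)) (obs : ℝ) :
    randTest n α (vals ∘ e) obs = randTest n α vals obs := by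
  have hle (x : ℝ) : #{π | (vals ∘ e) π ≤ x} = #{π | vals π ≤ x} := card_equiv e (by simp)
  have hgt (x : ℝ) : #{π | x < (vals ∘ e) π} = #{π | x < vals π} := card_equiv e (by simp)
  have heq (x : ℝ) : #{π | (vals ∘ e) π = x} = #{π | vals π = x} := card_equiv e (by simp)
  simp only [randTest, hle, hgt, heq]

theorem sum_randTest (hα0 : 0 < α) (hα1 : α < 1) (vals : Equiv.Perm (Fin n) → ℝ) :
    ∑ π, randTest n α vals (vals π) = n ! * α := by
  obtain ⟨π₀, hS⟩ := exists_randTest_threshold_eq hα0 hα1 vals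
  have hN0 : (#{π | vals π = vals π₀} : ℝ) ≠ 0 :=
    mod_cast (card_pos.2 ⟨π₀, by simp⟩ : 0 < #{π | vals π = vals π₀}).ne'
  simp only [randTest, hS, csInf_Ici]
  set a := ((n ! : ℝ) * α - #{π | vals π₀ < vals π}) / #{π | vals π = vals π₀}
  calc ∑ π, (if vals π₀ < vals π then 1 else if vals π = vals π₀ then a else 0)
      = ∑ π, ((if vals π₀ < vals π then 1 else 0) +
          if vals π = vals π₀ then a else 0) := by
        refine sum_congr rfl fun π _ => ?_
        rcases lt_trichotomy (vals π₀) (vals π) with h | h | h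
        · simp [h, h.ne']
        · simp [h]
        · simp [h.ne, h.not_gt]
    _ = #{π | vals π₀ < vals π} + #{π | vals π = vals π₀} * a := by
        rw [sum_add_distrib, sum_boole, ← sum_filter, sum_const, nsmul_eq_mul]
    _ = n ! * α := by rw [mul_div_cancel₀ _ hN0]; ring

lemma abs_randTest_le (hα0 : 0 ≤ α) (hα1 : α ≤ 1) (vals : Equiv.Perm (Fin n) → ℝ)
    (obs : ℝ) :
    |randTest n α vals obs| ≤ n ! := by
  set t := sInf {x : ℝ | (n !) - (⌊(n ! : ℝ) * α⌋).toNat ≤ #{π | vals π ≤ x}}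
  have hN : (1 : ℝ) ≤ n ! := mod_cast n.factorial_pos
  have hNp : (#{π | t < vals π} : ℝ) ≤ n ! := by
    exact_mod_cast (card_filter_le _ _).trans_eq (by simp [Fintype.card_perm])
  have hdiff : |n ! * α - #{π | t < vals π}| ≤ n ! := abs_le.2 ⟨by nlinarith, by nlinarith⟩
  have ha : |(n ! * α - #{π | t < vals π}) / #{π | vals π = t}| ≤ n ! := by
    rw [abs_div, Nat.abs_cast]
    rcases Nat.eq_zero_or_pos #{π | vals π = t} with h0 | h0
    · simp [h0]
    · exact (div_le_self (abs_nonneg _) (mod_cast h0)).trans hdiff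
  simp only [randTest]
  split_ifs
  · simpa using hN
  · exact ha
  · simp

end RandTest

section Measurability

variable {γ : Type*} [MeasurableSpace γ] {n : ℕ} {α : ℝ}

lemma measurable_card_filter {ι : Type*} [Fintype ι] {p : γ → ι → Prop}
    [∀ q, DecidablePred (p q)] (hp : ∀ i, MeasurableSet {q | p q i}) :
    Measurable fun q => #{i | p q i} := by
  simp only [card_filter]
  exact Finset.measurable_sum _ fun i _ => measurable_const.ite (hp i) measurable_const

lemma measurable_randTest (hα0 : 0 < α) (hα1 : α < 1) {vals : γ → Equiv.Perm (Fin n) → ℝ}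
    (hvals : ∀ π, Measurable fun q => vals q π) {obs : γ → ℝ} (hobs : Measurable obs) :
    Measurable fun q => randTest n α (vals q) (obs q) := by
  set t : γ → ℝ :=
    fun q => sInf {x : ℝ | (n !) - (⌊(n ! : ℝ) * α⌋).toNat ≤ #{π | vals q π ≤ x}}
  have ht : Measurable t := by
    refine measurable_of_Iic fun c => ?_
    have hpre :
        t ⁻¹' Set.Iic c = {q | (n !) - (⌊(n ! : ℝ) * α⌋).toNat ≤ #{π | vals q π ≤ c}} := by
      ext q
      obtain ⟨π₀, hS⟩ := exists_randTest_threshold_eq hα0 hα1 (vals q)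
      simp only [t, Set.mem_preimage, hS, csInf_Ici, Set.mem_Iic]
      exact (Set.ext_iff.1 hS c).symm
    rw [hpre]
    exact measurable_card_filter (fun π => measurableSet_le (hvals π) measurable_const)
      measurableSet_Ici
  have hNp : Measurable fun q => #{π | t q < vals q π} :=
    measurable_card_filter fun π => measurableSet_lt ht (hvals π)
  have hN0 : Measurable fun q => #{π | vals q π = t q} :=
    measurable_card_filter fun π => measurableSet_eq_fun (hvals π) ht
  exact measurable_const.ite (measurableSet_lt ht hobs)
    (((measurable_const.sub (measurable_from_top.comp hNp)).div
      (measurable_from_top.comp hN0)).ite (measurableSet_eq_fun hobs ht) measurable_const)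

end Measurability

theorem integral_randTest_eq {Ω : Type*} [MeasurableSpace Ω] {P : Measure Ω}
    [IsProbabilityMeasure P] {n : ℕ} {α : ℝ} (hα0 : 0 < α) (hα1 : α < 1)
    {Y : Ω → Equiv.Perm (Fin n) → ℝ} (hY : AEMeasurable Y P)
    (hshift : ∀ π, IdentDistrib (fun ω π' => Y ω (π * π')) Y P P) :
    ∫ ω, randTest n α (Y ω) (Y ω 1) ∂P = α := by
  set test : (Equiv.Perm (Fin n) → ℝ) → ℝ := fun y => randTest n α y (y 1)
  have hmeas : ∀ π, Measurable fun y : Equiv.Perm (Fin n) → ℝ => randTest n α y (y π) :=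
    fun π => measurable_randTest hα0 hα1 measurable_pi_apply (measurable_pi_apply π)
  -- relabelling the permutations by `π' ↦ π * π'` turns the observed value into `Y ω π`
  have htest_shift (π : Equiv.Perm (Fin n)) (ω : Ω) :
      test (fun π' => Y ω (π * π')) = randTest n α (Y ω) (Y ω π) := by
    simp only [test, mul_one]
    exact randTest_comp_equiv (Y ω) (Equiv.mulLeft π) _
  have hint (π : Equiv.Perm (Fin n)) :
      ∫ ω, randTest n α (Y ω) (Y ω π) ∂P = ∫ ω, test (Y ω) ∂P := by
    simp only [← htest_shift]
    exact ((hshift π).comp (hmeas 1)).integral_eq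
  have hintegrable : ∀ π, Integrable (fun ω => randTest n α (Y ω) (Y ω π)) P := fun π =>
    .of_bound ((hmeas π).comp_aemeasurable hY).aestronglyMeasurable _
      (ae_of_all _ fun ω => abs_randTest_le hα0.le hα1.le (Y ω) _)
  have hsum : ∑ π : Equiv.Perm (Fin n), ∫ ω, randTest n α (Y ω) (Y ω π) ∂P =
      n ! * α := by
    rw [← integral_finsetSum _ fun π _ => hintegrable π]
    simp [sum_randTest hα0 hα1]
  simp only [hint, sum_const, card_univ, Fintype.card_perm, Fintype.card_fin, nsmul_eq_mul] at hsum
  exact mul_left_cancel₀ (by positivity) hsum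

section Exchangeability

variable {Ω ι E F : Type*} [MeasurableSpace Ω] {P : Measure Ω} [Fintype ι]
  [MeasurableSpace E] [MeasurableSpace F]

lemma map_comp_perm_eq_map {V : Ω → ι → E} (hV : Measurable V)
    (hid : ∀ i j, IdentDistrib (fun ω => V ω i) (fun ω => V ω j) P P)
    (hind : iIndepFun (fun i ω => V ω i) P) (π : Equiv.Perm ι) :
    P.map (fun ω => V ω ∘ π) = P.map V := by
  have hVi : ∀ i, AEMeasurable (fun ω => V ω i) P :=
    fun i => ((measurable_pi_apply i).comp hV).aemeasurable
  calc P.map (fun ω => V ω ∘ π)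
      = Measure.pi fun i => P.map fun ω => V ω (π i) :=
        (hind.precomp π.injective).map_fun_eq_pi_map fun i => hVi (π i)
    _ = Measure.pi fun i => P.map fun ω => V ω i :=
        congrArg Measure.pi (funext fun i => (hid (π i) i).map_eq)
    _ = P.map V := (hind.map_fun_eq_pi_map hVi).symm

lemma identDistrib_comp_perm_prod [IsProbabilityMeasure P] {V : Ω → ι → E} {Z : Ω → F}
    (hV : Measurable V) (hZ : Measurable Z)
    (hid : ∀ i j, IdentDistrib (fun ω => V ω i) (fun ω => V ω j) P P)
    (hind : iIndepFun (fun i ω => V ω i) P) (hVZ : IndepFun V Z P) (π : Equiv.Perm ι) :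
    IdentDistrib (fun ω => (V ω ∘ π, Z ω)) (fun ω => (V ω, Z ω)) P P := by
  have hperm : Measurable fun v : ι → E => v ∘ π :=
    measurable_pi_lambda _ fun i => measurable_pi_apply (π i)
  refine ⟨((hperm.comp hV).prodMk hZ).aemeasurable, (hV.prodMk hZ).aemeasurable, ?_⟩
  calc P.map (fun ω => (V ω ∘ π, Z ω))
      = (P.map fun ω => V ω ∘ π).prod (P.map Z) :=
        (indepFun_iff_map_prod_eq_prod_map_map (hperm.comp hV).aemeasurable hZ.aemeasurable).1
          (hVZ.comp hperm measurable_id)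
    _ = (P.map V).prod (P.map Z) := by rw [map_comp_perm_eq_map hV hid hind π]
    _ = P.map (fun ω => (V ω, Z ω)) :=
        ((indepFun_iff_map_prod_eq_prod_map_map hV.aemeasurable hZ.aemeasurable).1 hVZ).symm

theorem integral_randTest_comp_perm [IsProbabilityMeasure P] {n : ℕ} {α : ℝ}
    (hα0 : 0 < α) (hα1 : α < 1) {V : Ω → Fin n → E} {Z : Ω → F}
    {T : (Fin n → E) × F → ℝ} (hT : Measurable T)
    (hexch : ∀ π : Equiv.Perm (Fin n),
      IdentDistrib (fun ω => (V ω ∘ π, Z ω)) (fun ω => (V ω, Z ω)) P P) :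
    ∫ ω, randTest n α (fun π => T (V ω ∘ π, Z ω)) (T (V ω, Z ω)) ∂P = α := by
  set Ψ : (Fin n → E) × F → Equiv.Perm (Fin n) → ℝ := fun q π => T (q.1 ∘ π, q.2)
  have hΨ : Measurable Ψ := by fun_prop
  exact integral_randTest_eq hα0 hα1 (hΨ.comp_aemeasurable (hexch 1).aemeasurable_snd)
    fun π => (hexch π).comp hΨ

end Exchangeability

section EntrywiseMeasurable

variable {γ : Type*} [MeasurableSpace γ] {a b c : ℕ}

lemma measurable_matrix_mul_apply {f : γ → Matrix (Fin a) (Fin b) ℝ}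
    {g : γ → Matrix (Fin b) (Fin c) ℝ} (hf : ∀ i j, Measurable fun q => f q i j)
    (hg : ∀ i j, Measurable fun q => g q i j) (i : Fin a) (j : Fin c) :
    Measurable fun q => (f q * g q) i j := by
  simp only [Matrix.mul_apply]
  exact Finset.measurable_sum _ fun l _ => (hf i l).mul (hg l j)

lemma measurable_matrix_det {f : γ → Matrix (Fin a) (Fin a) ℝ}
    (hf : ∀ i j, Measurable fun q => f q i j) : Measurable fun q => (f q).det := by
  simp only [Matrix.det_apply, Units.smul_def, zsmul_eq_mul]
  exact Finset.measurable_sum _ fun σ _ =>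
    (Finset.measurable_prod _ fun i _ => hf (σ i) i).const_mul _

lemma measurable_matrix_inv_apply {f : γ → Matrix (Fin a) (Fin a) ℝ}
    (hf : ∀ i j, Measurable fun q => f q i j) (i j : Fin a) :
    Measurable fun q => (f q)⁻¹ i j := by
  simp only [Matrix.inv_def, Ring.inverse_eq_inv, Matrix.smul_apply, smul_eq_mul,
    Matrix.adjugate_apply]
  refine (measurable_matrix_det hf).inv.mul (measurable_matrix_det fun i' j' => ?_)
  simp only [Matrix.updateRow_apply]
  split_ifs
  exacts [measurable_const, hf i' j']

lemma measurable_mulVec_apply {f : γ → Matrix (Fin a) (Fin b) ℝ} {v : γ → Fin b → ℝ}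
    (hf : ∀ i j, Measurable fun q => f q i j) (hv : ∀ j, Measurable fun q => v q j)
    (i : Fin a) :
    Measurable fun q => (f q *ᵥ v q) i := by
  simp only [Matrix.mulVec, dotProduct]
  exact Finset.measurable_sum _ fun l _ => (hf i l).mul (hv l)

lemma measurable_dotProduct {v w : γ → Fin a → ℝ} (hv : ∀ j, Measurable fun q => v q j)
    (hw : ∀ j, Measurable fun q => w q j) : Measurable fun q => v q ⬝ᵥ w q := by
  simp only [dotProduct]
  exact Finset.measurable_sum _ fun l _ => (hv l).mul (hw l)

lemma measurable_projPerp_apply {X : γ → Matrix (Fin a) (Fin b) ℝ}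
    (hX : ∀ i j, Measurable fun q => X q i j) (i j : Fin a) :
    Measurable fun q => projPerp (X q) i j := by
  have hXt : ∀ i j, Measurable fun q => (X q)ᵀ i j := fun i j => hX j i
  exact measurable_const.sub <| measurable_matrix_mul_apply
    (measurable_matrix_mul_apply hX
      (measurable_matrix_inv_apply (measurable_matrix_mul_apply hXt hX))) hXt i j

lemma measurable_ARstat {k p : ℕ} {W : γ → Matrix (Fin a) (Fin k) ℝ}
    {X : γ → Matrix (Fin a) (Fin p) ℝ} {u : γ → Fin a → ℝ}
    (hW : ∀ i j, Measurable fun q => W q i j) (hX : ∀ i j, Measurable fun q => X q i j)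
    (hu : ∀ i, Measurable fun q => u q i) :
    Measurable fun q => ARstat (W q) (X q) (u q) := by
  have hM := measurable_projPerp_apply hX
  have hut := measurable_mulVec_apply hM hu
  have hB := measurable_matrix_mul_apply (fun i j => hW j i) hM
  have hv := measurable_mulVec_apply hB hut
  have hD : ∀ i j, Measurable fun q =>
      Matrix.diagonal (fun l => (projPerp (X q) *ᵥ u q) l ^ 2) i j := fun i j => by
    simp only [Matrix.diagonal_apply]
    split_ifs
    exacts [(hut i).pow_const 2, measurable_const]
  have hC := measurable_matrix_inv_apply
    (measurable_matrix_mul_apply (measurable_matrix_mul_apply hB hD) fun i j => hB j i)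
  exact measurable_dotProduct hv (measurable_mulVec_apply hC hv)

end EntrywiseMeasurable

theorem stmt4_general {Ω : Type*} [MeasurableSpace Ω] (P : Measure Ω) [IsProbabilityMeasure P]
    (n k p : ℕ)
    (W : Ω → Fin n → Fin k → ℝ) (X : Ω → Fin n → Fin p → ℝ) (u : Ω → Fin n → ℝ)
    (hWmeas : Measurable W) (hXumeas : Measurable fun ω => (X ω, u ω))
    (hid : ∀ i j : Fin n, IdentDistrib (fun ω => W ω i) (fun ω => W ω j) P P)
    (hiind : iIndepFun (fun i ω => W ω i) P)
    (hindep : IndepFun W (fun ω => (X ω, u ω)) P)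
    (α : ℝ) (hα : α ∈ Set.Ioo (0 : ℝ) 1) :
    (∀ π : Equiv.Perm (Fin n),
        Measure.map (fun ω => ARstat (Matrix.of fun i j => W ω (π i) j) (Matrix.of (X ω)) (u ω)) P
          = Measure.map (fun ω => ARstat (Matrix.of fun i j => W ω i j) (Matrix.of (X ω)) (u ω)) P)
    ∧ ∫ ω, randTest n α
          (fun π => ARstat (Matrix.of fun i j => W ω (π i) j) (Matrix.of (X ω)) (u ω))
          (ARstat (Matrix.of fun i j => W ω i j) (Matrix.of (X ω)) (u ω)) ∂P = α := by
  have hAR : Measurable fun q : (Fin n → Fin k → ℝ) × (Fin n → Fin p → ℝ) × (Fin n → ℝ) =>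
      ARstat (Matrix.of q.1) (Matrix.of q.2.1) q.2.2 :=
    measurable_ARstat (fun _ _ => by fun_prop) (fun _ _ => by fun_prop) fun _ => by fun_prop
  have hexch := identDistrib_comp_perm_prod hWmeas hXumeas hid hiind hindep
  have hsize := integral_randTest_comp_perm hα.1 hα.2 hAR hexch
  exact ⟨fun π => ((hexch π).comp hAR).map_eq, hsize⟩

/-- Exactness of the permutation AR test `PAR₁` obtained by permuting the rows of the
instrument matrix `W`: if the rows of `W` are i.i.d. and `W` is independent of `(X, u)`
(`X` containing an intercept column), then under the null the statistic has the same
distribution after any fixed row permutation of `W`, and the randomization test has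
exact size `α`. -/
theorem stmt4 {Ω : Type*} [MeasurableSpace Ω] (P : Measure Ω) [IsProbabilityMeasure P]
    (n k p : ℕ) (hp : 0 < p)
    (W : Ω → Fin n → Fin k → ℝ) (X : Ω → Fin n → Fin p → ℝ) (u : Ω → Fin n → ℝ)
    (hWmeas : Measurable W) (hXumeas : Measurable fun ω => (X ω, u ω))
    (hint : ∀ ω i, X ω i ⟨0, hp⟩ = 1)
    (hid : ∀ i j : Fin n, IdentDistrib (fun ω => W ω i) (fun ω => W ω j) P P)
    (hiind : iIndepFun (fun i ω => W ω i) P)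
    (hindep : IndepFun W (fun ω => (X ω, u ω)) P)
    (α : ℝ) (hα : α ∈ Set.Ioo (0 : ℝ) 1) :
    (∀ π : Equiv.Perm (Fin n),
        Measure.map (fun ω => ARstat (Matrix.of fun i j => W ω (π i) j) (Matrix.of (X ω)) (u ω)) P
          = Measure.map (fun ω => ARstat (Matrix.of fun i j => W ω i j) (Matrix.of (X ω)) (u ω)) P)
    ∧ ∫ ω, randTest n α
          (fun π => ARstat (Matrix.of fun i j => W ω (π i) j) (Matrix.of (X ω)) (u ω))
          (ARstat (Matrix.of fun i j => W ω i j) (Matrix.of (X ω)) (u ω)) ∂P = α :=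
  stmt4_general P n k p W X u hWmeas hXumeas hid hiind hindep α hα
end
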